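/- arXiv:1301.3931 — 2 statements merged into one kernel-verified Lean document; each statement's English description precedes it below -/
import Mathlib

section
/- If L ⊆ Σ* is recognized by a MOn-1qfa over Σ with m states with some cut-point isolated by δ > 0, then L is a regular language and sup_{x∈Σ*} var_L(x) ≤ m/δ²; in particular every language in LMO(Σ) is regular and has finite variation. -/
open Matrix

/-- A Measure-Only one-way quantum finite automaton (MOn-1qfa) over the alphabet `σ`
(the letter `none` plays the role of the end-marker `#`).  The data consists of:
the number of states `m`, for each letter `c` (and the end-marker) the number `k c`
of distinct eigenvalues of the observable `O_c`, the eigenvalues `eig c` themselves,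
the corresponding orthogonal projectors `P c`, the initial (row) vector `init`,
and the set `F` of (indices of) accepting eigenvalues of the end-marker observable. -/
structure MOnQFA (σ : Type) where
  m : ℕ
  k : Option σ → ℕ
  eig : (c : Option σ) → Fin (k c) → ℝ
  P : (c : Option σ) → Fin (k c) → Matrix (Fin m) (Fin m) ℂ
  init : Matrix (Fin 1) (Fin m) ℂ
  F : Finset (Fin (k none))

namespace MOnQFA

variable {σ : Type}

/-- Well-formedness of a MOn-1qfa: the eigenvalues of each observable are distinct,
the `P c j` are pairwise orthogonal Hermitian idempotents (orthogonal projectors)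
summing to the identity (so that `O_c = ∑ j, eig c j • P c j` is a Hermitian matrix
with spectral decomposition given by the data), and the initial vector has norm 1. -/
def Valid (A : MOnQFA σ) : Prop :=
  (∀ c, Function.Injective (A.eig c)) ∧
  (∀ c j, (A.P c j)ᴴ = A.P c j) ∧
  (∀ c j, A.P c j * A.P c j = A.P c j) ∧
  (∀ c j j', j ≠ j' → A.P c j * A.P c j' = 0) ∧
  (∀ c, ∑ j, A.P c j = 1) ∧
  (∑ i, Complex.normSq (A.init 0 i) = 1)

/-- The density matrix `σ(w)` reached after reading the word `w`:
`σ(ε) = π₀† π₀` and `σ(yc) = ∑ j, P_j(c) σ(y) P_j(c)`. -/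
noncomputable def dens (A : MOnQFA σ) (w : List σ) : Matrix (Fin A.m) (Fin A.m) ℂ :=
  w.foldl (fun ρ c => ∑ j, A.P (some c) j * ρ * A.P (some c) j) (A.initᴴ * A.init)

/-- The acceptance probability `p_A(w) = Tr (∑_{j ∈ F} P_j(#) σ(w) P_j(#))`. -/
noncomputable def prob (A : MOnQFA σ) (w : List σ) : ℝ :=
  (Matrix.trace (∑ j ∈ A.F, A.P none j * A.dens w * A.P none j)).re

end MOnQFA

/-- `LMO σ` : the class of languages recognized by some MOn-1qfa over `σ`
with an isolated cut-point. -/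
def LMO (σ : Type) : Set (Set (List σ)) :=
  {L | ∃ A : MOnQFA σ, A.Valid ∧ ∃ lam δ : ℝ, 0 < lam ∧ 0 < δ ∧
        (∀ w, |A.prob w - lam| ≥ δ) ∧ L = {w | A.prob w > lam}}

/-- `PMO σ` : the class of probabilistic events induced by MOn-1qfas over `σ`. -/
def PMO (σ : Type) : Set (List σ → ℝ) :=
  {φ | ∃ A : MOnQFA σ, A.Valid ∧ φ = A.prob}
/-- Two words are Nerode-equivalent w.r.t. `L` (they reach the same state of the
minimal automaton of `L`) if they have the same residuals:
`∀ z, u z ∈ L ↔ u' z ∈ L`. -/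
def NerodeEquiv {σ : Type} (L : Set (List σ)) (u u' : List σ) : Prop :=
  ∀ z : List σ, u ++ z ∈ L ↔ u' ++ z ∈ L

/-- The variation `var_L(w)` of a word `w = w₁⋯w_n`: the number of indices
`0 ≤ k < n` such that the prefixes `w₁⋯w_k` and `w₁⋯w_{k+1}` are not
Nerode-equivalent. -/
noncomputable def variation {σ : Type} (L : Set (List σ)) (w : List σ) : ℕ :=
  Nat.card {k : ℕ // k < w.length ∧ ¬ NerodeEquiv L (w.take k) (w.take (k + 1))}

/-- A language has finite variation if `sup_{w} var_L(w) < ∞`. -/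
def FiniteVariation {σ : Type} (L : Set (List σ)) : Prop :=
  ∃ B : ℕ, ∀ w : List σ, variation L w ≤ B

/-!
Measuring with a projective measurement `P` acts on density matrices as the pinching
`X ↦ ∑ j, P j * X * P j`, which is an orthogonal projection for the Hilbert–Schmidt inner product
`⟪X, Y⟫ = tr (Xᴴ * Y)`. Hence reading a word never increases the Hilbert–Schmidt distance between
two density matrices, while `p_A(w) = re ⟪Π, σ(w)⟫` for a projector `Π` with `‖Π‖ ≤ √m`. So if
`√m ‖σ(u) - σ(u')‖ < δ`, the isolated cut-point forces `u` and `u'` to be Nerode-equivalent; as all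
`σ(w)` lie in the unit ball of a finite-dimensional space, there are finitely many Nerode classes,
and `L` is regular by Myhill–Nerode. Along a word `x`, `‖σ(x₁⋯x_k)‖²` starts at `1` and, by
Pythagoras, drops by `‖σ(x₁⋯x_k) - σ(x₁⋯x_{k+1})‖²` at each step, which is at least `δ² / m`
whenever the Nerode class changes; so it changes at most `m / δ²` times.
-/

namespace Matrix

section HilbertSchmidt

variable {𝕜 : Type*} [RCLike 𝕜] {l n : Type*}

noncomputable def toHilbertSchmidt (X : Matrix l n 𝕜) : EuclideanSpace 𝕜 (l × n) :=
  WithLp.toLp 2 fun p => X p.1 p.2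

theorem toHilbertSchmidt_sub (X Y : Matrix l n 𝕜) :
    toHilbertSchmidt (X - Y) = toHilbertSchmidt X - toHilbertSchmidt Y := rfl

variable [Fintype l] [Fintype n]

theorem inner_toHilbertSchmidt (X Y : Matrix l n 𝕜) :
    inner 𝕜 (toHilbertSchmidt X) (toHilbertSchmidt Y) = (Xᴴ * Y).trace := by
  simp only [PiLp.inner_apply, toHilbertSchmidt, RCLike.inner_apply, trace, diag, mul_apply,
    conjTranspose_apply, Fintype.sum_prod_type, RCLike.star_def, mul_comm]
  exact Finset.sum_comm

theorem norm_toHilbertSchmidt_sq (X : Matrix l n 𝕜) :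
    ‖toHilbertSchmidt X‖ ^ 2 = RCLike.re (Xᴴ * X).trace := by
  rw [← inner_toHilbertSchmidt, inner_self_eq_norm_sq]

end HilbertSchmidt

section Pinching

variable {𝕜 : Type*} [RCLike 𝕜] {n ι : Type*} [Fintype n] [Fintype ι]

structure IsProjectiveMeasurement [DecidableEq n] (P : ι → Matrix n n 𝕜) : Prop
    extends CompleteOrthogonalIdempotents P where
  isSelfAdjoint : ∀ j, IsSelfAdjoint (P j)

variable {P : ι → Matrix n n 𝕜}

def pinching (P : ι → Matrix n n 𝕜) (X : Matrix n n 𝕜) : Matrix n n 𝕜 :=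
  ∑ j, P j * X * P j

theorem pinching_sub (X Y : Matrix n n 𝕜) : pinching P (X - Y) = pinching P X - pinching P Y := by
  simp only [pinching, Matrix.mul_sub, Matrix.sub_mul, Finset.sum_sub_distrib]

namespace IsProjectiveMeasurement

variable [DecidableEq n] (hP : IsProjectiveMeasurement P)
include hP

theorem conjTranspose_eq (j : ι) : (P j)ᴴ = P j := (hP.isSelfAdjoint j).star_eq

theorem trace_pinching_conjTranspose_mul (X Y : Matrix n n 𝕜) :
    ((pinching P X)ᴴ * Y).trace = (Xᴴ * pinching P Y).trace := by
  simp only [pinching, conjTranspose_sum, conjTranspose_mul, hP.conjTranspose_eq, Finset.sum_mul,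
    Finset.mul_sum, trace_sum, Matrix.mul_assoc]
  refine Finset.sum_congr rfl fun j _ => ?_
  rw [trace_mul_comm]
  simp only [Matrix.mul_assoc]

theorem pinching_pinching (X : Matrix n n 𝕜) : pinching P (pinching P X) = pinching P X := by
  simp only [pinching, Finset.mul_sum, Finset.sum_mul]
  rw [Finset.sum_comm]
  refine Finset.sum_congr rfl fun j _ =>
    (Finset.sum_eq_single j (fun i _ hij => ?_) (by simp)).trans ?_
  · rw [show P i * (P j * X * P j) * P i = P i * P j * X * (P j * P i) by
      simp only [Matrix.mul_assoc], hP.ortho hij, Matrix.zero_mul, Matrix.zero_mul]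
  · rw [show P j * (P j * X * P j) * P j = P j * P j * X * (P j * P j) by
      simp only [Matrix.mul_assoc], (hP.idem j).eq]

theorem inner_pinching_sub_pinching (X : Matrix n n 𝕜) :
    inner 𝕜 (toHilbertSchmidt (pinching P X)) (toHilbertSchmidt (X - pinching P X)) = 0 := by
  rw [inner_toHilbertSchmidt, Matrix.mul_sub, trace_sub, hP.trace_pinching_conjTranspose_mul,
    hP.trace_pinching_conjTranspose_mul, hP.pinching_pinching, sub_self]

theorem norm_sq_eq_norm_sq_pinching_add (X : Matrix n n 𝕜) :
    ‖toHilbertSchmidt X‖ ^ 2 =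
      ‖toHilbertSchmidt (pinching P X)‖ ^ 2 + ‖toHilbertSchmidt (X - pinching P X)‖ ^ 2 := by
  simpa only [sq, toHilbertSchmidt_sub, add_sub_cancel] using
    norm_add_sq_eq_norm_sq_add_norm_sq_of_inner_eq_zero _ _ (hP.inner_pinching_sub_pinching X)

theorem norm_pinching_le (X : Matrix n n 𝕜) :
    ‖toHilbertSchmidt (pinching P X)‖ ≤ ‖toHilbertSchmidt X‖ := by
  refine (pow_le_pow_iff_left₀ (norm_nonneg _) (norm_nonneg _) two_ne_zero).mp ?_
  rw [hP.norm_sq_eq_norm_sq_pinching_add X]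
  exact le_add_of_nonneg_right (sq_nonneg _)

end IsProjectiveMeasurement

end Pinching

end Matrix

section Projector

variable {𝕜 : Type*} [RCLike 𝕜] {n ι : Type*} [Fintype n] [Fintype ι]

theorem IsStarProjection.norm_toHilbertSchmidt_sq {Q : Matrix n n 𝕜} (hQ : IsStarProjection Q) :
    ‖toHilbertSchmidt Q‖ ^ 2 = RCLike.re Q.trace := by
  rw [Matrix.norm_toHilbertSchmidt_sq, ← star_eq_conjTranspose, hQ.isSelfAdjoint.star_eq,
    hQ.isIdempotentElem.eq]

variable [DecidableEq n]

theorem IsStarProjection.norm_toHilbertSchmidt_sq_le_card {Q : Matrix n n 𝕜}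
    (hQ : IsStarProjection Q) : ‖toHilbertSchmidt Q‖ ^ 2 ≤ Fintype.card n := by
  have h := hQ.one_sub.norm_toHilbertSchmidt_sq
  rw [trace_sub, trace_one, map_sub, RCLike.natCast_re, ← hQ.norm_toHilbertSchmidt_sq] at h
  linarith [sq_nonneg ‖toHilbertSchmidt (1 - Q)‖]

theorem Matrix.IsProjectiveMeasurement.isStarProjection_sum {P : ι → Matrix n n 𝕜}
    (hP : IsProjectiveMeasurement P) (s : Finset ι) : IsStarProjection (∑ j ∈ s, P j) :=
  ⟨hP.isIdempotentElem_sum, isSelfAdjoint_sum s fun j _ => hP.isSelfAdjoint j⟩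

end Projector

theorem lt_iff_lt_of_abs_sub_lt {a b lam δ : ℝ} (ha : δ ≤ |a - lam|) (hb : δ ≤ |b - lam|)
    (hab : |a - b| < δ) : lam < a ↔ lam < b := by
  rw [abs_lt] at hab
  rcases le_abs.mp ha with ha | ha <;> rcases le_abs.mp hb with hb | hb <;>
    constructor <;> intro <;> linarith

theorem TotallyBounded.finite_range_of_dist_lt {α β E : Type*} [PseudoMetricSpace E] {f : α → E}
    (hf : TotallyBounded (Set.range f)) {g : α → β} {ε : ℝ} (hε : 0 < ε)
    (hg : ∀ a b, dist (f a) (f b) < ε → g a = g b) : (Set.range g).Finite := by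
  obtain ⟨t, ht, hcover⟩ := Metric.totallyBounded_iff.mp hf (ε / 2) (half_pos hε)
  refine (ht.biUnion fun y _ =>
    (?_ : (g '' (f ⁻¹' Metric.ball y (ε / 2))).Subsingleton).finite).subset ?_
  · rintro _ ⟨a, ha, rfl⟩ _ ⟨b, hb, rfl⟩
    refine hg a b ?_
    linarith [dist_triangle_right (f a) (f b) y, Metric.mem_ball.mp ha, Metric.mem_ball.mp hb]
  · rintro _ ⟨a, rfl⟩
    obtain ⟨y, hy, ha⟩ := Set.mem_iUnion₂.mp (hcover ⟨a, rfl⟩)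
    exact Set.mem_iUnion₂.mpr ⟨y, hy, a, ha, rfl⟩

theorem natCard_mul_le_sub_of_le_sub_succ {t : ℕ → ℝ} {n : ℕ} {ε : ℝ} {p : ℕ → Prop}
    (ht : ∀ k < n, t (k + 1) ≤ t k) (hp : ∀ k < n, p k → ε ≤ t k - t (k + 1)) :
    Nat.card {k // k < n ∧ p k} * ε ≤ t 0 - t n := by
  classical
  have hcard : Nat.card {k // k < n ∧ p k} = ((Finset.range n).filter p).card := by
    rw [← Nat.card_eq_finsetCard]
    exact Nat.card_congr (Equiv.subtypeEquivRight fun k => by simp)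
  rw [hcard, ← Finset.sum_range_sub' t n]
  calc (((Finset.range n).filter p).card : ℝ) * ε = ∑ k ∈ (Finset.range n).filter p, ε := by
        rw [Finset.sum_const, nsmul_eq_mul]
    _ ≤ ∑ k ∈ (Finset.range n).filter p, (t k - t (k + 1)) := by
        refine Finset.sum_le_sum fun k hk => ?_
        rw [Finset.mem_filter, Finset.mem_range] at hk
        exact hp k hk.1 hk.2
    _ ≤ ∑ k ∈ Finset.range n, (t k - t (k + 1)) :=
        Finset.sum_le_sum_of_subset_of_nonneg (Finset.filter_subset _ _) fun k hk _ =>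
          sub_nonneg.mpr (ht k (Finset.mem_range.mp hk))

theorem nerodeEquiv_iff_leftQuotient_eq {σ : Type} {L : Set (List σ)} {u u' : List σ} :
    NerodeEquiv L u u' ↔ Language.leftQuotient L u = Language.leftQuotient L u' :=
  Set.ext_iff.symm

namespace MOnQFA

variable {σ : Type} {A : MOnQFA σ} {lam δ : ℝ}

theorem Valid.isProjectiveMeasurement (hA : A.Valid) (c : Option σ) :
    IsProjectiveMeasurement (A.P c) :=
  have ⟨_, hself, hidem, hortho, hsum, _⟩ := hA
  { idem := hidem c, ortho := hortho c, complete := hsum c, isSelfAdjoint := hself c }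

theorem Valid.init_mul_conjTranspose (hA : A.Valid) : A.init * A.initᴴ = 1 := by
  have ⟨_, _, _, _, _, hnorm⟩ := hA
  ext i j
  fin_cases i; fin_cases j
  simp [mul_apply, Complex.mul_conj, ← Complex.ofReal_sum, hnorm]

theorem Valid.m_pos (hA : A.Valid) : 0 < A.m := by
  have ⟨_, _, _, _, _, hnorm⟩ := hA
  obtain ⟨i, -, -⟩ := Finset.exists_ne_zero_of_sum_ne_zero (hnorm.trans_ne one_ne_zero)
  exact i.pos

theorem dens_concat (u : List σ) (c : σ) :
    A.dens (u ++ [c]) = pinching (A.P (some c)) (A.dens u) := by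
  simp only [dens, List.foldl_append, List.foldl_cons, List.foldl_nil, pinching]

theorem Valid.norm_dens_nil (hA : A.Valid) : ‖toHilbertSchmidt (A.dens [])‖ = 1 := by
  have hsq : ‖toHilbertSchmidt (A.dens [])‖ ^ 2 = 1 := by
    rw [norm_toHilbertSchmidt_sq, dens, List.foldl_nil, conjTranspose_mul,
      conjTranspose_conjTranspose, Matrix.mul_assoc, ← Matrix.mul_assoc A.init,
      hA.init_mul_conjTranspose, Matrix.one_mul, trace_mul_comm, hA.init_mul_conjTranspose,
      trace_one]
    simp
  rwa [pow_eq_one_iff_of_nonneg (norm_nonneg _) two_ne_zero] at hsq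

theorem Valid.norm_dens_le_one (hA : A.Valid) (w : List σ) : ‖toHilbertSchmidt (A.dens w)‖ ≤ 1 := by
  induction w using List.reverseRecOn with
  | nil => exact hA.norm_dens_nil.le
  | append_singleton u c ih =>
    rw [dens_concat]
    exact ((hA.isProjectiveMeasurement _).norm_pinching_le _).trans ih

theorem Valid.norm_dens_append_sub_le (hA : A.Valid) (u u' z : List σ) :
    ‖toHilbertSchmidt (A.dens (u ++ z) - A.dens (u' ++ z))‖ ≤
      ‖toHilbertSchmidt (A.dens u - A.dens u')‖ := by
  induction z generalizing u u' with
  | nil => simp only [List.append_nil, le_refl]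
  | cons c z ih =>
    calc ‖toHilbertSchmidt (A.dens (u ++ c :: z) - A.dens (u' ++ c :: z))‖
        ≤ ‖toHilbertSchmidt (A.dens (u ++ [c]) - A.dens (u' ++ [c]))‖ := by
          simpa only [List.append_assoc, List.singleton_append] using ih (u ++ [c]) (u' ++ [c])
      _ ≤ ‖toHilbertSchmidt (A.dens u - A.dens u')‖ := by
          rw [dens_concat, dens_concat, ← pinching_sub]
          exact (hA.isProjectiveMeasurement _).norm_pinching_le _

theorem Valid.norm_sq_dens_eq_add (hA : A.Valid) (u : List σ) (c : σ) :
    ‖toHilbertSchmidt (A.dens u)‖ ^ 2 =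
      ‖toHilbertSchmidt (A.dens (u ++ [c]))‖ ^ 2 +
        ‖toHilbertSchmidt (A.dens u - A.dens (u ++ [c]))‖ ^ 2 := by
  rw [dens_concat]
  exact (hA.isProjectiveMeasurement _).norm_sq_eq_norm_sq_pinching_add _

/-- The projector onto the accepting eigenspaces of `O_#`. -/
noncomputable def acceptProj (A : MOnQFA σ) : Matrix (Fin A.m) (Fin A.m) ℂ :=
  ∑ j ∈ A.F, A.P none j

theorem Valid.prob_eq_re_inner (hA : A.Valid) (w : List σ) :
    A.prob w = (inner ℂ (toHilbertSchmidt A.acceptProj) (toHilbertSchmidt (A.dens w))).re := by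
  have hP := hA.isProjectiveMeasurement none
  rw [inner_toHilbertSchmidt, prob, acceptProj, conjTranspose_sum, Finset.sum_mul, trace_sum,
    trace_sum]
  refine congrArg _ (Finset.sum_congr rfl fun j _ => ?_)
  rw [trace_mul_cycle, (hP.idem j).eq, hP.conjTranspose_eq]

theorem Valid.abs_prob_sub_le (hA : A.Valid) (u u' : List σ) :
    |A.prob u - A.prob u'| ≤ √A.m * ‖toHilbertSchmidt (A.dens u - A.dens u')‖ := by
  have hproj : ‖toHilbertSchmidt A.acceptProj‖ ≤ √A.m := by
    refine Real.le_sqrt_of_sq_le ?_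
    simpa [acceptProj] using
      ((hA.isProjectiveMeasurement none).isStarProjection_sum A.F).norm_toHilbertSchmidt_sq_le_card
  rw [hA.prob_eq_re_inner, hA.prob_eq_re_inner, ← Complex.sub_re, ← inner_sub_right,
    ← toHilbertSchmidt_sub]
  calc _ ≤ ‖inner ℂ (toHilbertSchmidt A.acceptProj) (toHilbertSchmidt (A.dens u - A.dens u'))‖ :=
        Complex.abs_re_le_norm _
    _ ≤ _ := (norm_inner_le_norm _ _).trans (mul_le_mul_of_nonneg_right hproj (norm_nonneg _))

theorem Valid.nerodeEquiv_of_sqrt_mul_norm_lt (hA : A.Valid)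
    (hiso : ∀ w, |A.prob w - lam| ≥ δ) {u u' : List σ}
    (h : √A.m * ‖toHilbertSchmidt (A.dens u - A.dens u')‖ < δ) :
    NerodeEquiv {w | A.prob w > lam} u u' := fun z =>
  lt_iff_lt_of_abs_sub_lt (hiso _) (hiso _) <| (hA.abs_prob_sub_le _ _).trans_lt <|
    (mul_le_mul_of_nonneg_left (hA.norm_dens_append_sub_le u u' z) (Real.sqrt_nonneg _)).trans_lt h

theorem Valid.finite_range_leftQuotient (hA : A.Valid) (hδ : 0 < δ)
    (hiso : ∀ w, |A.prob w - lam| ≥ δ) :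
    (Set.range (Language.leftQuotient ({w | A.prob w > lam} : Language σ))).Finite := by
  have hbdd : TotallyBounded (Set.range fun w => toHilbertSchmidt (A.dens w)) :=
    (isCompact_closedBall 0 1).totallyBounded.subset <| by
      rintro _ ⟨w, rfl⟩
      simpa using hA.norm_dens_le_one w
  have hm : 0 < √A.m := Real.sqrt_pos.mpr (by exact_mod_cast hA.m_pos)
  refine hbdd.finite_range_of_dist_lt (div_pos hδ hm) fun u u' h =>
    nerodeEquiv_iff_leftQuotient_eq.mp (hA.nerodeEquiv_of_sqrt_mul_norm_lt hiso ?_)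
  rwa [toHilbertSchmidt_sub, ← dist_eq_norm, ← lt_div_iff₀' hm]

theorem Valid.variation_le (hA : A.Valid) (hδ : 0 < δ) (hiso : ∀ w, |A.prob w - lam| ≥ δ)
    (x : List σ) : (variation {w | A.prob w > lam} x : ℝ) ≤ A.m / δ ^ 2 := by
  set t : ℕ → ℝ := fun k => ‖toHilbertSchmidt (A.dens (x.take k))‖ ^ 2
  have hm : (0 : ℝ) < A.m := by exact_mod_cast hA.m_pos
  have hstep : ∀ k < x.length, t k = t (k + 1) +
      ‖toHilbertSchmidt (A.dens (x.take k) - A.dens (x.take (k + 1)))‖ ^ 2 := by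
    intro k hk
    simp only [t, List.take_add_one, List.getElem?_eq_getElem hk, Option.toList_some]
    exact hA.norm_sq_dens_eq_add _ _
  have hdrop : ∀ k < x.length, ¬NerodeEquiv {w | A.prob w > lam} (x.take k) (x.take (k + 1)) →
      δ ^ 2 / A.m ≤ t k - t (k + 1) := by
    intro k hk hne
    have hfar : δ ≤ √A.m * ‖toHilbertSchmidt (A.dens (x.take k) - A.dens (x.take (k + 1)))‖ :=
      not_lt.mp fun h => hne (hA.nerodeEquiv_of_sqrt_mul_norm_lt hiso h)
    rw [hstep k hk, add_sub_cancel_left, div_le_iff₀ hm]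
    calc δ ^ 2 ≤ (√A.m * ‖toHilbertSchmidt (A.dens (x.take k) - A.dens (x.take (k + 1)))‖) ^ 2 :=
          pow_le_pow_left₀ hδ.le hfar 2
      _ = _ := by rw [mul_pow, Real.sq_sqrt hm.le, mul_comm]
  have hcount := natCard_mul_le_sub_of_le_sub_succ
    (fun k hk => by rw [hstep k hk]; exact le_add_of_nonneg_right (sq_nonneg _)) hdrop
  have ht0 : t 0 = 1 := by simp [t, hA.norm_dens_nil]
  have htn : 0 ≤ t x.length := sq_nonneg _
  rw [le_div_iff₀ (by positivity), ← div_le_one hm, mul_div_assoc]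
  exact hcount.trans (by linarith)

end MOnQFA

theorem lmo_regular_and_variation_bound_general
    (σ : Type) (L : Set (List σ))
    (A : MOnQFA σ) (hA : A.Valid) (lam δ : ℝ) (hδ : 0 < δ)
    (hiso : ∀ w, |A.prob w - lam| ≥ δ) (hL : L = {w | A.prob w > lam}) :
    (∃ (Q : Type) (_ : Fintype Q) (M : DFA σ Q), ∀ w, w ∈ M.accepts ↔ w ∈ L) ∧
    (∀ x : List σ, (variation L x : ℝ) ≤ (A.m : ℝ) / δ ^ 2) := by
  subst hL
  obtain ⟨Q, hQ, M, hM⟩ :=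
    Language.IsRegular.of_finite_range_leftQuotient (hA.finite_range_leftQuotient hδ hiso)
  exact ⟨⟨Q, hQ, M, fun w => by rw [hM]; rfl⟩, hA.variation_le hδ hiso⟩

/-- If `L ⊆ Σ*` is recognized by a MOn-1qfa over `Σ` with `m` states
with some cut-point isolated by `δ > 0`, then `L` is a regular language and
`var_L(x) ≤ m/δ²` for every word `x` (in particular `L` has finite variation). -/
theorem lmo_regular_and_variation_bound
    (σ : Type) [Fintype σ] [Nonempty σ] (L : Set (List σ))
    (A : MOnQFA σ) (hA : A.Valid) (lam δ : ℝ) (hlam : 0 < lam) (hδ : 0 < δ)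
    (hiso : ∀ w, |A.prob w - lam| ≥ δ) (hL : L = {w | A.prob w > lam}) :
    (∃ (Q : Type) (_ : Fintype Q) (M : DFA σ Q), ∀ w, w ∈ M.accepts ↔ w ∈ L) ∧
    (∀ x : List σ, (variation L x : ℝ) ≤ (A.m : ℝ) / δ ^ 2) :=
  lmo_regular_and_variation_bound_general σ L A hA lam δ hδ hiso hL
end

section
/- Let A be a MOn-1qfa over Σ recognizing the language L_A with cut-point λ ≠ 1/2 isolated by δ > 0. Then there exists a MOn-1qfa A' over Σ recognizing the same language L_A with cut-point 1/2 isolated by δ/(2·max{λ, 1−λ}). -/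
open Matrix

/-!
Adjoin to `A` one fresh basis state `e` that every observable leaves alone (it spans an eigenspace
of its own), start in `√a • π₀ ⊕ √(1 - a) • e`, and let `e` be accepting iff `λ < 1/2`. The
diagonal blocks of the density matrix after reading `w` are then `a • σ(w)` and `1 - a`, and only
they are seen by the final measurement, so `p_{A'} = a • p_A + [λ < 1/2] (1 - a)`. For
`a = 1 / (2 max{λ, 1 - λ})` this reads `p_{A'} - 1/2 = a (p_A - λ)`, which transports both the
language and the isolation gap.
-/

namespace Matrix

section FromBlocksFin

variable {α : Type*} {m n : ℕ}

/-- `fromBlocks` on `Fin (m + n)`: the first `m` indices form the upper left block. -/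
def fromBlocksFin (X : Matrix (Fin m) (Fin m) α) (B : Matrix (Fin m) (Fin n) α)
    (C : Matrix (Fin n) (Fin m) α) (D : Matrix (Fin n) (Fin n) α) :
    Matrix (Fin (m + n)) (Fin (m + n)) α :=
  reindex finSumFinEquiv finSumFinEquiv (fromBlocks X B C D)

lemma fromBlocksFin_mul [NonUnitalNonAssocSemiring α] (X X' : Matrix (Fin m) (Fin m) α)
    (B B' : Matrix (Fin m) (Fin n) α) (C C' : Matrix (Fin n) (Fin m) α)
    (D D' : Matrix (Fin n) (Fin n) α) :
    fromBlocksFin X B C D * fromBlocksFin X' B' C' D' =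
      fromBlocksFin (X * X' + B * C') (X * B' + B * D') (C * X' + D * C') (C * B' + D * D') := by
  simp only [fromBlocksFin, reindex_apply, submatrix_mul_equiv, fromBlocks_multiply]

lemma fromBlocksFin_diag_mul_mul_diag [NonUnitalSemiring α] (X : Matrix (Fin m) (Fin m) α)
    (B : Matrix (Fin m) (Fin n) α) (C : Matrix (Fin n) (Fin m) α) (D : Matrix (Fin n) (Fin n) α)
    (Y Z : Matrix (Fin m) (Fin m) α) (d e : Matrix (Fin n) (Fin n) α) :
    fromBlocksFin Y 0 0 d * fromBlocksFin X B C D * fromBlocksFin Z 0 0 e =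
      fromBlocksFin (Y * X * Z) (Y * B * e) (d * C * Z) (d * D * e) := by
  simp [fromBlocksFin_mul, Matrix.mul_assoc]

lemma fromBlocksFin_add [Add α] (X X' : Matrix (Fin m) (Fin m) α)
    (B B' : Matrix (Fin m) (Fin n) α) (C C' : Matrix (Fin n) (Fin m) α)
    (D D' : Matrix (Fin n) (Fin n) α) :
    fromBlocksFin X B C D + fromBlocksFin X' B' C' D' =
      fromBlocksFin (X + X') (B + B') (C + C') (D + D') := by
  rw [fromBlocksFin, fromBlocksFin, fromBlocksFin, ← fromBlocks_add]
  rfl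

lemma fromBlocksFin_zero [Zero α] : fromBlocksFin (0 : Matrix (Fin m) (Fin m) α) 0 0
    (0 : Matrix (Fin n) (Fin n) α) = 0 := by
  rw [fromBlocksFin, fromBlocks_zero]
  rfl

lemma fromBlocksFin_one [Zero α] [One α] : fromBlocksFin (1 : Matrix (Fin m) (Fin m) α) 0 0
    (1 : Matrix (Fin n) (Fin n) α) = 1 := by
  rw [fromBlocksFin, fromBlocks_one, reindex_apply, submatrix_one_equiv]

lemma sum_fromBlocksFin [AddCommMonoid α] {ι : Type*} (s : Finset ι)
    (X : ι → Matrix (Fin m) (Fin m) α) (B : ι → Matrix (Fin m) (Fin n) α)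
    (C : ι → Matrix (Fin n) (Fin m) α) (D : ι → Matrix (Fin n) (Fin n) α) :
    ∑ i ∈ s, fromBlocksFin (X i) (B i) (C i) (D i) =
      fromBlocksFin (∑ i ∈ s, X i) (∑ i ∈ s, B i) (∑ i ∈ s, C i) (∑ i ∈ s, D i) := by
  classical
  induction s using Finset.induction_on with
  | empty => simp [fromBlocksFin_zero]
  | insert i s hi ih => simp only [Finset.sum_insert hi, ih, fromBlocksFin_add]

lemma conjTranspose_fromBlocksFin [Star α] (X : Matrix (Fin m) (Fin m) α)
    (B : Matrix (Fin m) (Fin n) α) (C : Matrix (Fin n) (Fin m) α) (D : Matrix (Fin n) (Fin n) α) :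
    (fromBlocksFin X B C D)ᴴ = fromBlocksFin Xᴴ Cᴴ Bᴴ Dᴴ := by
  rw [fromBlocksFin, fromBlocksFin, conjTranspose_reindex, fromBlocks_conjTranspose]

lemma trace_fromBlocksFin [AddCommMonoid α] (X : Matrix (Fin m) (Fin m) α)
    (B : Matrix (Fin m) (Fin n) α) (C : Matrix (Fin n) (Fin m) α) (D : Matrix (Fin n) (Fin n) α) :
    trace (fromBlocksFin X B C D) = trace X + trace D := by
  rw [fromBlocksFin, trace, ← finSumFinEquiv.sum_comp]
  simp [Fintype.sum_sum_type, trace]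

end FromBlocksFin

end Matrix

lemma one_half_le_max_one_sub (lam : ℝ) : 1 / 2 ≤ max lam (1 - lam) := by
  rcases le_total lam (1 / 2) with h | h
  · exact le_max_of_le_right (by linarith)
  · exact le_max_of_le_left h

lemma inv_two_max_one_sub_pos (lam : ℝ) : 0 < (2 * max lam (1 - lam))⁻¹ :=
  inv_pos.2 (by linarith [one_half_le_max_one_sub lam])

lemma inv_two_max_one_sub_le_one (lam : ℝ) : (2 * max lam (1 - lam))⁻¹ ≤ 1 :=
  inv_le_one_of_one_le₀ (by linarith [one_half_le_max_one_sub lam])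

namespace MOnQFA

variable {σ : Type}

lemma dens_append_singleton (A : MOnQFA σ) (w : List σ) (c : σ) :
    A.dens (w ++ [c]) = ∑ j, A.P (some c) j * A.dens w * A.P (some c) j := by
  simp [dens, List.foldl_append]

lemma dens_nil (A : MOnQFA σ) : A.dens [] = A.initᴴ * A.init := rfl

lemma re_trace_dens_nil (A : MOnQFA σ) :
    (trace (A.dens [])).re = ∑ i, Complex.normSq (A.init 0 i) := by
  simp [dens, trace, mul_apply, Complex.normSq_apply]

/-- `1 + ∑ j, |A.eig c j|` is just some value distinct from every eigenvalue of `O_c`. -/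
@[reducible] noncomputable def addIdleState (A : MOnQFA σ) (a : ℝ) (acc : Bool) : MOnQFA σ where
  m := A.m + 1
  k c := A.k c + 1
  eig c := Fin.cons (1 + ∑ j, |A.eig c j|) (A.eig c)
  P c := Fin.cons (fromBlocksFin 0 0 0 1) fun j => fromBlocksFin (A.P c j) 0 0 0
  init := reindex (Equiv.refl _) finSumFinEquiv
    (fromCols (√a • A.init) (√(1 - a) • (1 : Matrix (Fin 1) (Fin 1) ℂ)))
  F := if acc then Finset.cons 0 (A.F.map (Fin.succEmb _)) (by simp)
    else A.F.map (Fin.succEmb _)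

section addIdleState

variable (A : MOnQFA σ) (a : ℝ) (acc : Bool)

lemma sum_P_addIdleState_conj (c : Option σ) (X : Matrix (Fin A.m) (Fin A.m) ℂ)
    (B : Matrix (Fin A.m) (Fin 1) ℂ) (C : Matrix (Fin 1) (Fin A.m) ℂ)
    (D : Matrix (Fin 1) (Fin 1) ℂ) :
    ∑ j, (A.addIdleState a acc).P c j * fromBlocksFin X B C D * (A.addIdleState a acc).P c j =
      fromBlocksFin (∑ j, A.P c j * X * A.P c j) 0 0 D := by
  simp [Fin.sum_univ_succ, fromBlocksFin_diag_mul_mul_diag, sum_fromBlocksFin, fromBlocksFin_add]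

lemma dens_addIdleState (ha : 0 ≤ a) (ha' : a ≤ 1) (w : List σ) :
    ∃ B C, (A.addIdleState a acc).dens w = fromBlocksFin (a • A.dens w) B C ((1 - a) • 1) := by
  induction w using List.reverseRecOn with
  | nil =>
    have hsq {r : ℝ} (hr : 0 ≤ r) {k l : ℕ} (M : Matrix (Fin 1) (Fin k) ℂ)
        (N : Matrix (Fin 1) (Fin l) ℂ) : (√r • M)ᴴ * (√r • N) = r • (Mᴴ * N) := by
      rw [conjTranspose_smul, star_trivial, Matrix.smul_mul, Matrix.mul_smul, smul_smul,
        Real.mul_self_sqrt hr]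
    refine ⟨?_, ?_, ?_⟩
    rotate_right
    simp only [dens_nil, addIdleState, reindex_apply, conjTranspose_submatrix]
    rw [submatrix_mul_equiv, conjTranspose_fromCols_eq_fromRows_conjTranspose,
      fromRows_mul_fromCols, hsq ha, hsq (sub_nonneg.2 ha'), conjTranspose_one, Matrix.one_mul]
    rfl
  | append_singleton w c ih =>
    obtain ⟨B, C, h⟩ := ih
    refine ⟨0, 0, ?_⟩
    rw [dens_append_singleton, dens_append_singleton, h, sum_P_addIdleState_conj,
      Finset.smul_sum]
    simp only [Matrix.mul_smul, Matrix.smul_mul]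

lemma prob_addIdleState (ha : 0 ≤ a) (ha' : a ≤ 1) (w : List σ) :
    (A.addIdleState a acc).prob w = a * A.prob w + if acc then 1 - a else 0 := by
  obtain ⟨B, C, hdens⟩ := A.dens_addIdleState a acc ha ha' w
  cases acc <;>
    simp [prob, hdens, fromBlocksFin_diag_mul_mul_diag, trace_fromBlocksFin, Finset.mul_sum,
      add_comm]

lemma valid_addIdleState (hA : A.Valid) (ha : 0 ≤ a) (ha' : a ≤ 1) :
    (A.addIdleState a acc).Valid := by
  obtain ⟨heig, hherm, hidem, horth, hsum, hnorm⟩ := hA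
  refine ⟨fun c => ?_, fun c j => ?_, fun c j => ?_, fun c j j' hjj' => ?_, fun c => ?_, ?_⟩
  · refine Fin.cons_injective_iff.2 ⟨fun ⟨i, hi⟩ => ?_, heig c⟩
    have : A.eig c i ≤ ∑ j, |A.eig c j| :=
      (le_abs_self _).trans (Finset.single_le_sum (fun j _ => abs_nonneg (A.eig c j))
        (Finset.mem_univ i))
    linarith
  · cases j using Fin.cases <;> simp [conjTranspose_fromBlocksFin, hherm]
  · cases j using Fin.cases <;> simp [fromBlocksFin_mul, hidem]
  · cases j using Fin.cases <;> cases j' using Fin.cases <;>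
      simp_all [fromBlocksFin_mul, fromBlocksFin_zero]
  · simp [Fin.sum_univ_succ, sum_fromBlocksFin, fromBlocksFin_add, hsum, fromBlocksFin_one]
  · obtain ⟨B, C, hdens⟩ := A.dens_addIdleState a acc ha ha' []
    rw [← re_trace_dens_nil, hdens, trace_fromBlocksFin, trace_smul, Complex.add_re,
      Complex.smul_re, re_trace_dens_nil, hnorm]
    simp

end addIdleState

section toCutpointHalf

variable (A : MOnQFA σ) (lam : ℝ)

noncomputable def toCutpointHalf : MOnQFA σ :=
  A.addIdleState (2 * max lam (1 - lam))⁻¹ (decide (lam < 1 / 2))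

lemma valid_toCutpointHalf (hA : A.Valid) : (A.toCutpointHalf lam).Valid :=
  A.valid_addIdleState _ _ hA (inv_two_max_one_sub_pos lam).le (inv_two_max_one_sub_le_one lam)

lemma prob_toCutpointHalf_sub_half (w : List σ) :
    (A.toCutpointHalf lam).prob w - 1 / 2 = (2 * max lam (1 - lam))⁻¹ * (A.prob w - lam) := by
  have hkey : (2 * max lam (1 - lam))⁻¹ * (2 * max lam (1 - lam)) = 1 :=
    inv_mul_cancel₀ (by linarith [one_half_le_max_one_sub lam])
  rw [toCutpointHalf, prob_addIdleState _ _ _ (inv_two_max_one_sub_pos lam).le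
    (inv_two_max_one_sub_le_one lam)]
  by_cases h : lam < 1 / 2
  · rw [max_eq_right (by linarith)] at hkey ⊢
    simp only [h, decide_true, if_true]
    linear_combination (-1 / 2 : ℝ) * hkey
  · rw [max_eq_left (by linarith)] at hkey ⊢
    simp only [h, decide_false, Bool.false_eq_true, if_false]
    linear_combination (1 / 2 : ℝ) * hkey

end toCutpointHalf

end MOnQFA

theorem exists_mon1qfa_cutpoint_one_half_general
    (σ : Type) (A : MOnQFA σ) (hA : A.Valid)
    (lam δ : ℝ)
    (hiso : ∀ w, |A.prob w - lam| ≥ δ) :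
    ∃ A' : MOnQFA σ, A'.Valid ∧
      (∀ w, |A'.prob w - 1 / 2| ≥ δ / (2 * max lam (1 - lam))) ∧
      {w | A'.prob w > 1 / 2} = {w | A.prob w > lam} := by
  have ha := inv_two_max_one_sub_pos lam
  refine ⟨A.toCutpointHalf lam, A.valid_toCutpointHalf lam hA, fun w => ?_, ?_⟩
  · rw [A.prob_toCutpointHalf_sub_half, abs_mul, abs_of_pos ha, div_eq_inv_mul]
    exact mul_le_mul_of_nonneg_left (hiso w) ha.le
  · ext w
    rw [Set.mem_ofPred_eq, Set.mem_ofPred_eq, gt_iff_lt, gt_iff_lt, ← sub_pos,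
      A.prob_toCutpointHalf_sub_half, mul_pos_iff_of_pos_left ha, sub_pos]

/-- If a MOn-1qfa `A` over `Σ` recognizes `L_A` with cut-point
`λ ≠ 1/2` isolated by `δ > 0`, then there is a MOn-1qfa `A'` over `Σ` recognizing the
same language with cut-point `1/2` isolated by `δ/(2·max{λ, 1−λ})`. -/
theorem exists_mon1qfa_cutpoint_one_half
    (σ : Type) [Fintype σ] [Nonempty σ] (A : MOnQFA σ) (hA : A.Valid)
    (lam δ : ℝ) (hlam : 0 < lam) (hne : lam ≠ 1 / 2) (hδ : 0 < δ)
    (hiso : ∀ w, |A.prob w - lam| ≥ δ) :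
    ∃ A' : MOnQFA σ, A'.Valid ∧
      (∀ w, |A'.prob w - 1 / 2| ≥ δ / (2 * max lam (1 - lam))) ∧
      {w | A'.prob w > 1 / 2} = {w | A.prob w > lam} :=
  exists_mon1qfa_cutpoint_one_half_general σ A hA lam δ hiso
end
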